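/- Let Σ be a finite alphabet, w a timed word over Σ with timestamps τ_1 < … < τ_{|w|} (τ_0 = 0), {F_p}_{p∈I} a family of sets of timed words over Σ ⊔ {$} indexed by an arbitrary set I, and k an index with 1 ≤ k ≤ |w|. If for every real t₀ with τ_{k−1} ≤ t₀ < τ_k and every p ∈ I one has w(k,|w|) − t₀ ∉ (F_p)_{−$} · T(Σ), then for every real t₀ with τ_{k−1} ≤ t₀ < τ_k, every t′ > t₀, and every p ∈ I: w|_(t₀,t′) ∉ F_p. -/

import Mathlib

open scoped Classical NNRat

namespace PTPM

/-- Timed words over an alphabet `α`: finite sequences of (letter, timestamp). -/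
abbrev TWord (α : Type*) := List (α × ℝ)

/-- Well-formedness of a timed word: positive, strictly increasing timestamps. -/
def IsTW {α : Type*} (w : TWord α) : Prop :=
  (∀ p ∈ w, 0 < p.2) ∧ w.Chain' (fun p q => p.2 < q.2)

/-- `T(Σ)`: the set of timed words over `α`. -/
def TW (α : Type*) : Set (TWord α) := {w | IsTW w}

/-- `T^n(Σ)`: the set of timed words over `α` of length `n`. -/
def TWn (α : Type*) (n : ℕ) : Set (TWord α) := {w | IsTW w ∧ w.length = n}

/-- The shift `w + s` of a timed word. -/
def shift {α : Type*} (w : TWord α) (s : ℝ) : TWord α := w.map fun p => (p.1, p.2 + s)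

/-- Last timestamp of a timed word (`0` for the empty word). -/
def lastT {α : Type*} (w : TWord α) : ℝ := (w.getLast?.map Prod.snd).getD 0

/-- Non-absorbing concatenation `w · w'`. -/
def ncat {α : Type*} (w w' : TWord α) : TWord α := w ++ shift w' (lastT w)

/-- Non-absorbing concatenation lifted to sets of timed words. -/
def ncatS {α : Type*} (W W' : Set (TWord α)) : Set (TWord α) :=
  {u | ∃ w ∈ W, ∃ w' ∈ W', u = ncat w w'}

/-- `τ_k`, the `k`-th timestamp (1-indexed), with `τ_0 = 0`. -/
def tau {α : Type*} (w : TWord α) (k : ℕ) : ℝ := lastT (w.take k)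

/-- The subsequence `w(i,j)` (1-indexed, both inclusive; empty if `i > j`). -/
def sub {α : Type*} (w : TWord α) (i j : ℕ) : TWord α := (w.take j).drop (i - 1)

/-- Letter at position `k` (1-indexed), if any. -/
def letterAt {α : Type*} (w : TWord α) (k : ℕ) : Option α := w[k - 1]?.map Prod.fst

/-- Embedding of timed words over `Σ` into timed words over `Σ ⊔ {$}`;
the terminal character `$` is modelled by `none`. -/
def liftW {α : Type*} (w : TWord α) : TWord (Option α) := w.map fun p => (some p.1, p.2)

/-- `T(Σ)` viewed inside the alphabet `Σ ⊔ {$}`. -/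
def TWl (α : Type*) : Set (TWord (Option α)) := liftW '' TW α

/-- `T^n(Σ)` viewed inside the alphabet `Σ ⊔ {$}`. -/
def TWln (α : Type*) (n : ℕ) : Set (TWord (Option α)) := liftW '' TWn α n

/-- The segment `w|_(t,t')`, a timed word over `Σ ⊔ {$}`. -/
noncomputable def seg {α : Type*} (w : TWord α) (t t' : ℝ) : TWord (Option α) :=
  (w.filter fun p => decide (t < p.2 ∧ p.2 < t')).map
      (fun p => ((some p.1 : Option α), p.2 - t))
    ++ [((none : Option α), t' - t)]

/-- `L_{-$}`: the words of `L` with the last element removed. -/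
def minusDollar {β : Type*} (L : Set (TWord β)) : Set (TWord β) :=
  {u | ∃ x ∈ L, x ≠ [] ∧ u = x.dropLast}

/-- Untimed projection of a timed word. -/
def untimed {α : Type*} (w : TWord α) : List α := w.map Prod.fst

/-- Untimed projection of a set of timed words. -/
def untimedS {α : Type*} (W : Set (TWord α)) : Set (List α) := untimed '' W

/-- `U · Σ*`: the set of finite words having a prefix in `U`. -/
def prefSet {σ : Type*} (U : Set (List σ)) : Set (List σ) := {x | ∃ u ∈ U, ∃ s, x = u ++ s}

/-- `Ŷ = {y + s | y ∈ Y, s ≥ 0}`. -/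
def hatS {α : Type*} (Y : Set (TWord α)) : Set (TWord α) :=
  {u | ∃ y ∈ Y, ∃ s : ℝ, 0 ≤ s ∧ u = shift y s}

/-- Comparison operators `⋈ ∈ {<, ≤, =, ≥, >}`. -/
inductive Cmp | lt | le | eq | ge | gt

def Cmp.eval : Cmp → ℝ → ℝ → Prop
  | .lt, a, b => a < b
  | .le, a, b => a ≤ b
  | .eq, a, b => a = b
  | .ge, a, b => b ≤ a
  | .gt, a, b => b < a

/-- Atomic guard constraints `x ⋈ d` (`d ∈ ℕ`) and `x ⋈ p` (`p` a parameter). -/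
inductive Atom (C P : Type*)
  | nat (x : C) (op : Cmp) (d : ℕ)
  | par (x : C) (op : Cmp) (p : P)

/-- A guard: a finite conjunction of atomic constraints. -/
abbrev Guard (C P : Type*) := List (Atom C P)

def Atom.sat {C P : Type*} (μ : C → ℝ) (v : P → ℚ≥0) : Atom C P → Prop
  | .nat x op d => op.eval (μ x) (d : ℝ)
  | .par x op p => op.eval (μ x) ((v p : ℚ) : ℝ)

/-- `μ ⊨ v(g)`. -/
def Guard.sat {C P : Type*} (μ : C → ℝ) (v : P → ℚ≥0) (g : Guard C P) : Prop :=
  ∀ a ∈ g, a.sat μ v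

def Atom.mapCP {C P C' P' : Type*} (fc : C → C') (fp : P → P') : Atom C P → Atom C' P'
  | .nat x op d => .nat (fc x) op d
  | .par x op p => .par (fc x) op (fp p)

def Guard.mapCP {C P C' P' : Type*} (fc : C → C') (fp : P → P') (g : Guard C P) :
    Guard C' P' :=
  g.map (Atom.mapCP fc fp)

/-- Parametric timed automaton with alphabet `α`, locations `L`, clocks `C`, parameters `P`.
An edge `(ℓ, g, a, R, ℓ')` has source `ℓ`, guard `g`, action `a`, resets `R`, target `ℓ'`. -/
structure PTA (α L C P : Type*) where
  init : L
  acc : Set L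
  edges : Set (L × Guard C P × α × Set C × L)
  finEdges : edges.Finite

/-- Reset of the clocks in `R` to `0`. -/
noncomputable def resetv {C : Type*} (μ : C → ℝ) (R : Set C) : C → ℝ :=
  fun x => if x ∈ R then 0 else μ x

/-- `Steps A v ℓ μ τ w ℓ'`: from configuration (location `ℓ`, clock valuation `μ`,
absolute time `τ`) there is a run of `A[v]` reading the timed word `w` and ending in `ℓ'`. -/
inductive Steps {α L C P : Type*} (A : PTA α L C P) (v : P → ℚ≥0) :
    L → (C → ℝ) → ℝ → TWord α → L → Prop
  | refl (ℓ : L) (μ : C → ℝ) (τ : ℝ) : Steps A v ℓ μ τ [] ℓ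
  | step {ℓ : L} {μ : C → ℝ} {τ : ℝ} {g : Guard C P} {a : α} {R : Set C} {ℓ' ℓ'' : L}
      {d : ℝ} {w : TWord α}
      (hd : 0 ≤ d)
      (he : (ℓ, g, a, R, ℓ') ∈ A.edges)
      (hg : Guard.sat (fun x => μ x + d) v g)
      (h : Steps A v ℓ' (resetv (fun x => μ x + d) R) (τ + d) w ℓ'') :
      Steps A v ℓ μ τ ((a, τ + d) :: w) ℓ''

/-- The language `L(A[v])`: associated words of accepting runs that are timed words. -/
def lang {α L C P : Type*} (A : PTA α L C P) (v : P → ℚ≥0) : Set (TWord α) :=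
  {w | IsTW w ∧ ∃ ℓ ∈ A.acc, Steps A v A.init (fun _ => 0) 0 w ℓ}

/-- `A_ℓ`: the PTA `A` with accepting set `{ℓ}`. -/
def PTA.locAcc {α L C P : Type*} (A : PTA α L C P) (ℓ : L) : PTA α L C P :=
  { A with acc := {ℓ} }

/-- The match set `M(w, A)`. -/
def matchSet {α L C P : Type*} (w : TWord α) (A : PTA (Option α) L C P) :
    Set (ℝ × ℝ × (P → ℚ≥0)) :=
  {x | 0 ≤ x.1 ∧ x.1 < x.2.1 ∧ seg w x.1 x.2.1 ∈ lang A x.2.2}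

/-- `V_{ℓ,n}`. -/
def Vset {α L C P : Type*} (A : PTA (Option α) L C P) (ℓ : L) (n : ℕ) :
    Set (P → ℚ≥0) :=
  {v | ∃ v' : P → ℚ≥0,
    (ncatS (lang (A.locAcc ℓ) v) (TWl α) ∩
      ncatS (ncatS (TWln α n) (hatS (minusDollar (lang A v')))) (TWl α)).Nonempty}

/-- The KMP-style skip value `Δ_KMP(ℓ, V) = min {n ≥ 1 | V ⊆ V_{ℓ,n}}` (min ∅ = ⊤). -/
noncomputable def DeltaKMP {α L C P : Type*} (A : PTA (Option α) L C P) (ℓ : L)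
    (V : Set (P → ℚ≥0)) : ℕ∞ :=
  sInf ((fun n : ℕ => (n : ℕ∞)) '' {n : ℕ | 1 ≤ n ∧ V ⊆ Vset A ℓ n})

/-- The non-parametric KMP-style skip value `Δ'_KMP(ℓ) = min_v Δ_KMP(ℓ, {v})`. -/
noncomputable def DeltaKMP' {α L C P : Type*} (A : PTA (Option α) L C P) (ℓ : L) : ℕ∞ :=
  ⨅ v : P → ℚ≥0, DeltaKMP A ℓ {v}

/-- Untimed words over `Σ`, viewed inside `Σ ⊔ {$}`. -/
def pureW {α : Type*} (x : List (Option α)) : Prop := ∀ c ∈ x, c ≠ none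

/-- `Σ^n · U` for sets of finite untimed words. -/
def catLen {α : Type*} (n : ℕ) (U : Set (List (Option α))) : Set (List (Option α)) :=
  {y | ∃ x u, x.length = n ∧ pureW x ∧ u ∈ U ∧ y = x ++ u}

/-- `Σ^N a Σ*`: finite words of length at least `N+1` whose `(N+1)`-st letter is `a`. -/
def sigNa {α : Type*} (N : ℕ) (a : α) : Set (List (Option α)) :=
  {x | N + 1 ≤ x.length ∧ x[N]? = some (some a)}

/-- The Quick-Search-style skip value `Δ_QS(a)` (min ∅ = ⊤). -/
noncomputable def DeltaQS {α L C P : Type*} (A : PTA (Option α) L C P) (N : ℕ) (a : α) :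
    ℕ∞ :=
  sInf ((fun n : ℕ => (n : ℕ∞)) '' {n : ℕ | 1 ≤ n ∧ ∃ v : P → ℚ≥0,
    (sigNa N a ∩ catLen n (untimedS (minusDollar (lang A v)))).Nonempty})

private lemma lastT_liftW' {α : Type*} (v : TWord α) : lastT (liftW v) = lastT v := by
  rcases h : v.getLast? with _ | a <;>
    simp [lastT, liftW, List.getLast?_map, h]

private lemma lastT_shift' {α : Type*} (v : TWord α) (s : ℝ) (hv : v ≠ []) :
    lastT (shift v s) = lastT v + s := by
  simp [lastT, shift, List.getLast?_map, List.getLast?_eq_getLast hv]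

private lemma snd_le_lastT' {α : Type*} :
    ∀ {l : TWord α}, l.Pairwise (fun p q => p.2 < q.2) →
      ∀ {p : α × ℝ}, p ∈ l → p.2 ≤ lastT l
  | [], _, _, hp => absurd hp List.not_mem_nil
  | [a], _, p, hp => by
    simp only [List.mem_singleton] at hp
    simp [hp, lastT]
  | a :: b :: t, hs, p, hp => by
    rcases List.pairwise_cons.mp hs with ⟨ha, ht⟩
    have hlast : lastT (a :: b :: t) = lastT (b :: t) := by simp [lastT]
    rw [hlast]
    rcases List.mem_cons.mp hp with rfl | hp
    · exact ((ha b (by simp)).trans_le (snd_le_lastT' ht (by simp))).le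
    · exact snd_le_lastT' ht hp

private lemma filter_split' {α : Type*} (t' : ℝ) :
    ∀ (l : TWord α), l.Pairwise (fun p q => p.2 < q.2) →
      l = l.filter (fun p => decide (p.2 < t')) ++ l.filter (fun p => !decide (p.2 < t'))
  | [], _ => rfl
  | q :: l, hs => by
    rcases List.pairwise_cons.mp hs with ⟨hq, hl⟩
    by_cases hqt : q.2 < t'
    · have := filter_split' t' l hl
      rw [List.filter_cons_of_pos (by simp [hqt]),
        List.filter_cons_of_neg (by simp [hqt]), List.cons_append]
      exact congrArg (q :: ·) this
    · have hnil : l.filter (fun p => decide (p.2 < t')) = [] := by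
        rw [List.filter_eq_nil_iff]
        intro a ha
        simp only [decide_eq_true_eq]
        exact fun hc => hqt ((hq a ha).trans hc)
      have := filter_split' t' l hl
      rw [hnil, List.nil_append] at this
      rw [List.filter_cons_of_neg (by simp [hqt]),
        List.filter_cons_of_pos (by simp [hqt]), hnil, List.nil_append]
      exact congrArg (q :: ·) this

/-- if no shifted suffix starting in `[τ_{k-1}, τ_k)` lies in
`(F_p)_{-$} · T(Σ)`, then no segment starting there matches `F_p`. -/
theorem statement18 {α : Type*} [Finite α] {I : Type*} (w : TWord α) (hw : IsTW w)
    (F : I → Set (TWord (Option α)))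
    (k : ℕ) (hk1 : 1 ≤ k) (hkw : k ≤ w.length)
    (h : ∀ t₀ : ℝ, tau w (k - 1) ≤ t₀ → t₀ < tau w k → ∀ p : I,
      liftW (shift (sub w k w.length) (-t₀)) ∉ ncatS (minusDollar (F p)) (TWl α)) :
    ∀ t₀ : ℝ, tau w (k - 1) ≤ t₀ → t₀ < tau w k →
      ∀ t' : ℝ, t₀ < t' → ∀ p : I, seg w t₀ t' ∉ F p := by
  obtain ⟨m, rfl⟩ : ∃ m, k = m + 1 := ⟨k - 1, (Nat.succ_pred_eq_of_pos hk1).symm⟩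
  simp only [Nat.add_sub_cancel] at h ⊢
  intro t₀ ht1 ht2 t' htt' p hseg
  have hm : m < w.length := hkw
  haveI : IsTrans (α × ℝ) (fun p q : α × ℝ => p.2 < q.2) := ⟨fun _ _ _ => lt_trans⟩
  have hpw : w.Pairwise (fun p q => p.2 < q.2) := List.isChain_iff_pairwise.mp hw.2
  set s : TWord α := w.drop m with hs_def
  set s₁ : TWord α := s.filter (fun p => decide (p.2 < t')) with hs₁_def
  set s₂ : TWord α := s.filter (fun p => !decide (p.2 < t')) with hs₂_def
  have hspw : s.Pairwise (fun p q => p.2 < q.2) := hpw.sublist (List.drop_sublist m w)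
  have ha : tau w (m + 1) = w[m].2 := by
    have htake : w.take (m + 1) = w.take m ++ [w[m]] := by
      rw [List.take_succ, List.getElem?_eq_getElem hm]
      rfl
    simp only [tau, htake, lastT, List.getLast?_concat, Option.map_some,
      Option.getD_some]
  have hdropmem : ∀ q ∈ s, t₀ < q.2 := by
    intro q hq
    rw [hs_def, List.drop_eq_getElem_cons hm] at hq
    rcases List.mem_cons.mp hq with rfl | hq
    · rw [ha] at ht2; exact ht2
    · have : w[m].2 < q.2 := by
        have := hspw
        rw [hs_def, List.drop_eq_getElem_cons hm] at this
        exact (List.pairwise_cons.mp this).1 q hq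
      rw [ha] at ht2; exact ht2.trans this
  have htakemem : ∀ q ∈ w.take m, ¬ t₀ < q.2 := by
    intro q hq
    have h1 : q.2 ≤ lastT (w.take m) :=
      snd_le_lastT' (hpw.sublist (List.take_sublist m w)) hq
    have h2 : lastT (w.take m) ≤ t₀ := ht1
    exact not_lt.mpr (h1.trans h2)
  have hfilter : w.filter (fun p => decide (t₀ < p.2 ∧ p.2 < t')) = s₁ := by
    conv_lhs => rw [← List.take_append_drop m w]
    rw [List.filter_append]
    have h1 : (w.take m).filter (fun p => decide (t₀ < p.2 ∧ p.2 < t')) = [] := by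
      rw [List.filter_eq_nil_iff]
      intro q hq
      simp only [decide_eq_true_eq, not_and]
      exact fun hc => absurd hc (htakemem q hq)
    have h2 : (w.drop m).filter (fun p => decide (t₀ < p.2 ∧ p.2 < t')) = s₁ := by
      rw [hs₁_def, hs_def]
      apply List.filter_congr
      intro q hq
      simp only [decide_eq_true_eq, decide_eq_decide]
      exact and_iff_right (hdropmem q hq)
    rw [h1, h2, List.nil_append]
  have hsplit : s = s₁ ++ s₂ := filter_split' t' s hspw
  set u : TWord (Option α) := liftW (shift s₁ (-t₀)) with hu_def
  set c : ℝ := lastT u with hc_def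
  have hct' : t₀ + c < t' := by
    by_cases h1 : s₁ = []
    · have : c = 0 := by simp [hc_def, hu_def, h1, liftW, shift, lastT]
      rw [this, add_zero]; exact htt'
    · have hc : c = lastT s₁ + (-t₀) := by
        rw [hc_def, hu_def, lastT_liftW', lastT_shift' _ _ h1]
      have hlt : lastT s₁ < t' := by
        have hmem : s₁.getLast h1 ∈ s₁ := List.getLast_mem h1
        have := List.of_mem_filter
          (show s₁.getLast h1 ∈ s.filter (fun p => decide (p.2 < t')) from hmem)
        simp only [decide_eq_true_eq] at this
        rw [lastT, List.getLast?_eq_getLast h1]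
        exact this
      rw [hc]; linarith
  have hs₂mem : ∀ q ∈ s₂, t' ≤ q.2 := by
    intro q hq
    have := List.of_mem_filter
      (show q ∈ s.filter (fun p => !decide (p.2 < t')) from hq)
    simp only [Bool.not_eq_true', decide_eq_false_iff_not, not_lt] at this
    exact this
  apply h t₀ ht1 ht2 p
  refine ⟨u, ⟨seg w t₀ t', hseg, by simp [seg], ?_⟩,
    liftW (shift s₂ (-(t₀ + c))), ⟨shift s₂ (-(t₀ + c)), ⟨?_, ?_⟩, rfl⟩, ?_⟩
  · -- u = (seg w t₀ t').dropLast
    rw [seg, List.dropLast_concat, hfilter, hu_def]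
    simp [liftW, shift, List.map_map, Function.comp, sub_eq_add_neg]
  · -- positivity
    intro q hq
    rw [shift, List.mem_map] at hq
    obtain ⟨r, hr, rfl⟩ := hq
    have := hs₂mem r hr
    simp only
    linarith [hct']
  · -- chain'
    have hch : s₂.Chain' (fun p q => p.2 < q.2) :=
      (hpw.sublist ((List.filter_sublist (l := s)).trans (List.drop_sublist m w))).isChain
    rw [shift]
    refine (List.isChain_map _).mpr (hch.imp ?_)
    intro a b hab
    simpa using hab
  · -- the concatenation equality
    have hsub : sub w (m + 1) w.length = s := by
      simp [sub, hs_def]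
    rw [hsub, ncat]
    have hshift : shift (liftW (shift s₂ (-(t₀ + c)))) (lastT u) =
        liftW (shift s₂ (-t₀)) := by
      have e1 : ∀ (v : TWord α) (x y : ℝ), shift (liftW (shift v x)) y
          = liftW (v.map fun p => (p.1, p.2 + x + y)) := by
        intro v x y
        simp [shift, liftW, List.map_map, Function.comp]
      rw [← hc_def, e1]
      have : ∀ p : α × ℝ, p.2 + -(t₀ + c) + c = p.2 + -t₀ := by intro p; ring
      simp only [this]
      simp [shift, liftW, List.map_map, Function.comp]
    rw [hshift, hu_def]
    rw [hsplit]
    simp [liftW, shift, List.map_map, Function.comp]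

end PTPM
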